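/- arXiv:0707.0087 — 2 statements merged into one kernel-verified Lean document; each statement's English description precedes it below -/
import Mathlib

section
/- For subsets Y₁, Y₂ of the vertex set of a finite simple graph, cl(cl(Y₁) ∩ Y₂) ∩ Y₂ = cl(Y₁) ∩ Y₂. -/
variable {V : Type*}

/-- `u ∈ Z` and `u` is within distance 1 of every element of `Y`. -/
def orth (G : SimpleGraph V) (Z Y : Set V) : Set V :=
  {u | u ∈ Z ∧ ∀ y ∈ Y, u = y ∨ G.Adj u y}

def perp (G : SimpleGraph V) (Y : Set V) : Set V := orth G Set.univ Y

def cl (G : SimpleGraph V) (Y : Set V) : Set V := perp G (perp G Y)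

def IsSimplex (G : SimpleGraph V) (Y : Set V) : Prop := Y.Pairwise G.Adj

def IsClosedSet (G : SimpleGraph V) (Y : Set V) : Prop := cl G Y = Y

lemma subset_perp_perp (G : SimpleGraph V) (Y : Set V) : Y ⊆ perp G (perp G Y) := by
  intro y hy
  refine ⟨Set.mem_univ _, fun u hu => ?_⟩
  rcases hu.2 y hy with h | h
  · exact Or.inl h.symm
  · exact Or.inr h.symm

lemma perp_anti (G : SimpleGraph V) {A B : Set V} (h : A ⊆ B) : perp G B ⊆ perp G A :=
  fun u hu => ⟨hu.1, fun y hy => hu.2 y (h hy)⟩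

lemma perp_perp_perp (G : SimpleGraph V) (Y : Set V) :
    perp G (perp G (perp G Y)) = perp G Y :=
  Set.Subset.antisymm (perp_anti G (subset_perp_perp G Y)) (subset_perp_perp G (perp G Y))

theorem stmt8 [Fintype V] (G : SimpleGraph V) (Y₁ Y₂ : Set V) :
    cl G (cl G Y₁ ∩ Y₂) ∩ Y₂ = cl G Y₁ ∩ Y₂ := by
  apply Set.Subset.antisymm
  · intro u hu
    refine ⟨?_, hu.2⟩
    have h1 : cl G (cl G Y₁ ∩ Y₂) ⊆ cl G (cl G Y₁) :=
      perp_anti G (perp_anti G Set.inter_subset_left)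
    have h2 : cl G (cl G Y₁) = cl G Y₁ := by
      unfold cl
      rw [perp_perp_perp]
    exact h2 ▸ h1 hu.1
  · intro u hu
    exact ⟨subset_perp_perp G _ ⟨hu.1, hu.2⟩, hu.2⟩
end

section
/- In a finite simple graph, if a vertex x has ∼⊥-class of size at least 2 then its ∼∘-class is {x}; and if its ∼∘-class has size at least 2 then its ∼∘-class is an independent set (no two of its vertices adjacent) and its ∼⊥-class is {x}. -/
variable {V : Type*}

theorem stmt19 [Fintype V] (G : SimpleGraph V) (x : V) :
    (2 ≤ Set.ncard {y | perp G {y} = perp G {x}} →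
      {y | perp G {y} \ {y} = perp G {x} \ {x}} = {x}) ∧
    (2 ≤ Set.ncard {y | perp G {y} \ {y} = perp G {x} \ {x}} →
      ({y | perp G {y} \ {y} = perp G {x} \ {x}}.Pairwise fun a b => ¬ G.Adj a b) ∧
        {y | perp G {y} = perp G {x}} = {x}) := by
  classical
  have hperp : ∀ u y : V, u ∈ perp G {y} ↔ (u = y ∨ G.Adj u y) := by
    intro u y; simp [perp, orth]
  have key1 : 2 ≤ Set.ncard {y | perp G {y} = perp G {x}} →
      {y | perp G {y} \ {y} = perp G {x} \ {x}} = {x} := by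
    intro h2
    obtain ⟨y, hy, hyx⟩ := Set.exists_ne_of_one_lt_ncard (lt_of_lt_of_le one_lt_two h2) x
    have hy : perp G {y} = perp G {x} := hy
    have hyadj : G.Adj y x := by
      have : y ∈ perp G {x} := hy ▸ ((hperp y y).2 (Or.inl rfl))
      rcases (hperp y x).1 this with h | h
      · exact absurd h hyx
      · exact h
    ext z
    simp only [Set.mem_setOf_eq, Set.mem_singleton_iff]
    constructor
    · intro hz
      by_contra hzx
      have hnadj : ¬ G.Adj z x := by
        intro hadj
        have : z ∈ perp G {x} \ {x} := ⟨(hperp z x).2 (Or.inr hadj), hzx⟩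
        rw [← hz] at this
        exact this.2 rfl
      have hzy : z ≠ y := by
        intro h; subst h
        have hx : x ∈ perp G {z} := hy ▸ ((hperp x x).2 (Or.inl rfl))
        have : x ∈ perp G {z} \ {z} := ⟨hx, fun h => hyx h.symm⟩
        rw [hz] at this
        exact this.2 rfl
      have hymem : y ∈ perp G {x} \ {x} := ⟨(hperp y x).2 (Or.inr hyadj), hyx⟩
      rw [← hz] at hymem
      rcases (hperp y z).1 hymem.1 with h | h
      · exact hzy h.symm
      · -- G.Adj y z, so z ∈ perp G {y} = perp G {x}, so G.Adj z x
        have : z ∈ perp G {x} := hy ▸ ((hperp z y).2 (Or.inr h.symm))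
        rcases (hperp z x).1 this with h' | h'
        · exact hzx h'
        · exact hnadj h'
    · intro h; subst h; rfl
  constructor
  · exact key1
  · intro h2
    constructor
    · intro a ha b hb hab hadj
      have ha : perp G {a} \ {a} = perp G {x} \ {x} := ha
      have hb : perp G {b} \ {b} = perp G {x} \ {x} := hb
      have : b ∈ perp G {a} \ {a} := ⟨(hperp b a).2 (Or.inr hadj.symm), hab.symm⟩
      rw [ha, ← hb] at this
      exact this.2 rfl
    · ext w
      simp only [Set.mem_setOf_eq, Set.mem_singleton_iff]
      constructor
      · intro hw
        by_contra hwx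
        have h2' : 2 ≤ Set.ncard {y | perp G {y} = perp G {x}} := by
          rw [show (2:ℕ) = 1 + 1 from rfl]
          refine Nat.succ_le_of_lt ?_
          rw [Set.one_lt_ncard (Set.toFinite _)]
          exact ⟨w, hw, x, rfl, hwx⟩
        have := key1 h2'
        rw [this, Set.ncard_singleton] at h2
        omega
      · intro h; subst h; rfl
end
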